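/- Let {R_i} be a finite set of rank-one matrices in the space of a×b complex matrices such that no nonzero matrix of rank at most 1 is Frobenius-orthogonal to every R_i (an unextendible product basis). Then the subspace S = span{R_i} is strongly unextendible: for every integer k ≥ 1, no nonzero matrix of rank at most 1 (of size a^k × b^k) is Frobenius-orthogonal to the span of all k-fold Kronecker products M_1 ⊗ ⋯ ⊗ M_k with each M_i ∈ S. -/

import Mathlib

open Matrix

noncomputable section

/-- Frobenius (Hilbert-Schmidt) inner product `⟨M, N⟩ = tr(Mᴴ N)`. -/
def frobInner {α β : Type*} [Fintype α] [Fintype β] (M N : Matrix α β ℂ) : ℂ :=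
  Matrix.trace (Mᴴ * N)

/-- `k`-fold Kronecker product of a family of matrices. -/
def kronPow {a b : ℕ} (k : ℕ) (M : Fin k → Matrix (Fin a) (Fin b) ℂ) :
    Matrix (Fin k → Fin a) (Fin k → Fin b) ℂ :=
  Matrix.of fun i j => ∏ t, M t (i t) (j t)

/-- A set `S` of `a×b` matrices is `k`-unextendible if no nonzero matrix of rank at
most one (equivalently, no nonzero outer product `u vᵀ`) is Frobenius-orthogonal to
`S^{⊗k}`, i.e. to every `k`-fold Kronecker product of elements of `S`. -/
def KUnextendible {a b : ℕ} (S : Set (Matrix (Fin a) (Fin b) ℂ)) (k : ℕ) : Prop :=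
  ∀ (u : (Fin k → Fin a) → ℂ) (v : (Fin k → Fin b) → ℂ), u ≠ 0 → v ≠ 0 →
    ∃ M : Fin k → Matrix (Fin a) (Fin b) ℂ, (∀ t, M t ∈ S) ∧
      frobInner (kronPow k M) (Matrix.vecMulVec u v) ≠ 0

/-- A set of matrices is strongly unextendible if it is `k`-unextendible for all `k ≥ 1`. -/
def StronglyUnextendible {a b : ℕ} (S : Set (Matrix (Fin a) (Fin b) ℂ)) : Prop :=
  ∀ k : ℕ, 1 ≤ k → KUnextendible S k

/-- A family of matrices is an unextendible product basis if no nonzero matrix of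
rank at most one is Frobenius-orthogonal to every member of the family. -/
def IsUPB {α β ι : Type*} [Fintype α] [Fintype β] (R : ι → Matrix α β ℂ) : Prop :=
  ∀ (u : α → ℂ) (v : β → ℂ), u ≠ 0 → v ≠ 0 →
    ∃ i, frobInner (R i) (Matrix.vecMulVec u v) ≠ 0

/-! Writing `R i = wᵢ zᵢᵀ`, the Frobenius pairing of a Kronecker product `R f₁ ⊗ ⋯ ⊗ R fₖ` with
`u vᵀ` factors as `⟨w_{f₁} ⊗ ⋯ ⊗ w_{fₖ}, u⟩ ⟨z_{f₁} ⊗ ⋯ ⊗ z_{fₖ}, v⟩`, so it suffices to choose the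
indices `fₜ` making both factors nonzero. Pick a nonzero slice of `u` and of `v` in the first tensor
slot; the UPB property gives an `i` pairing nontrivially with both slices, so contracting the first
slot of `u` with `wᵢ` and of `v` with `zᵢ` leaves nonzero tensors of order `k - 1`, and induction on
`k` chooses the remaining indices. -/

def tprodVec {K α : Type*} [CommMonoid K] {k : ℕ} (w : Fin k → α → K) : (Fin k → α) → K :=
  fun i => ∏ t, w t (i t)

theorem star_tprodVec {K α : Type*} [CommSemiring K] [StarRing K] {k : ℕ} (w : Fin k → α → K) :
    star (tprodVec w) = tprodVec (fun t => star (w t)) := by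
  ext i
  simp [tprodVec, star_prod]

section
variable {K α : Type*} [CommSemiring K] [Fintype α]

theorem tprodVec_dotProduct_fin_zero (w : Fin 0 → α → K) (u : (Fin 0 → α) → K) :
    tprodVec w ⬝ᵥ u = u default := by
  rw [dotProduct, Fintype.sum_unique, tprodVec, Fin.prod_univ_zero, one_mul]

theorem tprodVec_cons_dotProduct {k : ℕ} (w₀ : α → K) (w : Fin k → α → K)
    (u : (Fin (k + 1) → α) → K) :
    tprodVec (Fin.cons w₀ w) ⬝ᵥ u = tprodVec w ⬝ᵥ fun i => w₀ ⬝ᵥ fun x => u (Fin.cons x i) := by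
  simp only [dotProduct, tprodVec, Finset.mul_sum]
  rw [← (Fin.consEquiv fun _ => α).sum_comp, Fintype.sum_prod_type, Finset.sum_comm]
  refine Finset.sum_congr rfl fun i _ => Finset.sum_congr rfl fun x _ => ?_
  simp only [Fin.consEquiv, Equiv.coe_fn_mk, Fin.prod_univ_succ, Fin.cons_zero, Fin.cons_succ]
  ring

end

theorem exists_cons_slice_ne_zero {α M : Type*} [Zero M] {k : ℕ} {u : (Fin (k + 1) → α) → M}
    (hu : u ≠ 0) : ∃ i, (fun x => u (Fin.cons x i)) ≠ 0 := by
  obtain ⟨j, hj⟩ := Function.ne_iff.mp hu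
  exact ⟨Fin.tail j, Function.ne_iff.mpr ⟨j 0, by rwa [Fin.cons_self_tail]⟩⟩

theorem exists_tprodVec_dotProduct_ne_zero {K α β ι : Type*} [CommSemiring K]
    [Fintype α] [Fintype β] (w : ι → α → K) (z : ι → β → K)
    (h : ∀ u v, u ≠ 0 → v ≠ 0 → ∃ i, w i ⬝ᵥ u ≠ 0 ∧ z i ⬝ᵥ v ≠ 0) :
    ∀ (k : ℕ) (u : (Fin k → α) → K) (v : (Fin k → β) → K), u ≠ 0 → v ≠ 0 →
      ∃ f : Fin k → ι, tprodVec (w ∘ f) ⬝ᵥ u ≠ 0 ∧ tprodVec (z ∘ f) ⬝ᵥ v ≠ 0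
  | 0, u, v, hu, hv => by
    refine ⟨finZeroElim, ?_, ?_⟩ <;> rw [tprodVec_dotProduct_fin_zero]
    · exact fun h0 => hu (funext fun i => by rwa [Subsingleton.elim i default])
    · exact fun h0 => hv (funext fun i => by rwa [Subsingleton.elim i default])
  | k + 1, u, v, hu, hv => by
    obtain ⟨i₀, hi₀⟩ := exists_cons_slice_ne_zero hu
    obtain ⟨j₀, hj₀⟩ := exists_cons_slice_ne_zero hv
    obtain ⟨i, hwi, hzi⟩ := h _ _ hi₀ hj₀
    obtain ⟨f, hwf, hzf⟩ := exists_tprodVec_dotProduct_ne_zero w z h k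
      (fun i' => w i ⬝ᵥ fun x => u (Fin.cons x i')) (fun j' => z i ⬝ᵥ fun y => v (Fin.cons y j'))
      (Function.ne_iff.mpr ⟨i₀, hwi⟩) (Function.ne_iff.mpr ⟨j₀, hzi⟩)
    refine ⟨Fin.cons i f, ?_, ?_⟩ <;> rwa [Fin.comp_cons, tprodVec_cons_dotProduct]

theorem exists_eq_vecMulVec_of_rank_le_one {K m n : Type*} [Field K] [Fintype m] [Fintype n]
    (M : Matrix m n K) (h : M.rank ≤ 1) : ∃ w z, M = vecMulVec w z := by
  rw [rank_eq_finrank_span_cols, finrank_le_one_iff] at h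
  obtain ⟨w, hw⟩ := h
  choose z hz using fun j => hw ⟨M.col j, Submodule.subset_span ⟨j, rfl⟩⟩
  refine ⟨w, z, Matrix.ext fun i j => ?_⟩
  have := congrFun (congrArg Subtype.val (hz j)) i
  simp only [Submodule.coe_smul, Pi.smul_apply, smul_eq_mul, col_apply] at this
  rw [vecMulVec_apply, ← this, mul_comm]

theorem frobInner_vecMulVec_vecMulVec {α β : Type*} [Fintype α] [Fintype β]
    (w u : α → ℂ) (z v : β → ℂ) :
    frobInner (vecMulVec w z) (vecMulVec u v) = (star w ⬝ᵥ u) * (star z ⬝ᵥ v) := by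
  simp only [frobInner, trace, diag, mul_apply, conjTranspose_apply, vecMulVec_apply,
    dotProduct, Finset.sum_mul_sum, star_mul', Pi.star_apply]
  rw [Finset.sum_comm]
  exact Finset.sum_congr rfl fun _ _ => Finset.sum_congr rfl fun _ _ => by ring

theorem kronPow_vecMulVec {a b k : ℕ} (w : Fin k → Fin a → ℂ) (z : Fin k → Fin b → ℂ) :
    kronPow k (fun t => vecMulVec (w t) (z t)) = vecMulVec (tprodVec w) (tprodVec z) := by
  ext i j
  simp [kronPow, tprodVec, vecMulVec_apply, Finset.prod_mul_distrib]

/-- **The span of an unextendible product basis is strongly unextendible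
(Lemma 7 of the paper).** -/
theorem span_of_UPB_strongly_unextendible
    {a b r : ℕ} (R : Fin r → Matrix (Fin a) (Fin b) ℂ)
    (hrank : ∀ i, (R i).rank = 1) (hR : IsUPB R) :
    StronglyUnextendible
      ((Submodule.span ℂ (Set.range R) : Submodule ℂ (Matrix (Fin a) (Fin b) ℂ)) :
        Set (Matrix (Fin a) (Fin b) ℂ)) := by
  choose w z hwz using fun i => exists_eq_vecMulVec_of_rank_le_one (R i) (hrank i).le
  have hUPB : ∀ u v, u ≠ 0 → v ≠ 0 → ∃ i, star (w i) ⬝ᵥ u ≠ 0 ∧ star (z i) ⬝ᵥ v ≠ 0 := by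
    intro u v hu hv
    obtain ⟨i, hi⟩ := hR u v hu hv
    rw [hwz i, frobInner_vecMulVec_vecMulVec] at hi
    exact ⟨i, left_ne_zero_of_mul hi, right_ne_zero_of_mul hi⟩
  intro k _ u v hu hv
  obtain ⟨f, hwf, hzf⟩ := exists_tprodVec_dotProduct_ne_zero _ _ hUPB k u v hu hv
  refine ⟨R ∘ f, fun t => Submodule.subset_span ⟨f t, rfl⟩, ?_⟩
  rw [show R ∘ f = fun t => vecMulVec (w (f t)) (z (f t)) from funext fun t => hwz (f t),
    kronPow_vecMulVec, frobInner_vecMulVec_vecMulVec, star_tprodVec, star_tprodVec]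
  exact mul_ne_zero hwf hzf
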